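/- arXiv:1911.03784 — 4 statements merged into one kernel-verified Lean document; each statement's English description precedes it below -/
import Mathlib

section
/- For X ∈ ℝⁿˣᵈ, y ∈ ℝⁿ, ε > 0, the worst-case adversarial least-squares loss maxᵟ (1/2)Σᵢ(⟨xᵢ+δᵢ, w⟩ − yᵢ)² over perturbations δᵢ with ‖δᵢ‖ ≤ ε equals (1/2)‖Xw − y‖₂² + ε‖w‖*‖Xw − y‖₁ + (ε²n/2)‖w‖*². -/
/-! The loss separates over the samples, so its worst case is the sum of the per-sample worst
cases. In sample `i` the perturbation enters only through `t = ⟪δᵢ, w⟫`, which ranges over the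
interval `[-ε‖w‖*, ε‖w‖*]` (both ends are attained, since the unit ball of a norm on a
finite-dimensional space is compact). The maximum of `(aᵢ + t)²` over this interval is
`(|aᵢ| + ε‖w‖*)²`, attained at `t = sign(aᵢ) ε‖w‖*`; expanding and summing gives the formula. -/

open Set

theorem isGreatest_image_sq_add (a c : ℝ) {T : Set ℝ} (hT : ∀ t ∈ T, |t| ≤ c) (hc : c ∈ T)
    (hnc : -c ∈ T) : IsGreatest ((fun t => (a + t) ^ 2) '' T) ((|a| + c) ^ 2) := by
  refine ⟨?_, ?_⟩
  · rcases le_or_gt 0 a with ha | ha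
    · exact ⟨c, hc, by rw [abs_of_nonneg ha]⟩
    · exact ⟨-c, hnc, by rw [abs_of_neg ha]; ring⟩
  · rintro _ ⟨t, ht, rfl⟩
    dsimp only
    rw [← sq_abs]
    gcongr
    exact (abs_add_le a t).trans (add_le_add_right (hT t ht) _)

theorem isGreatest_sum_pi {ι α : Type*} [Fintype ι] {A : ι → Set α} {g : ι → α → ℝ}
    {M : ι → ℝ} (h : ∀ i, IsGreatest (g i '' A i) (M i)) :
    IsGreatest ((fun δ => ∑ i, g i (δ i)) '' univ.pi A) (∑ i, M i) := by
  refine ⟨?_, ?_⟩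
  · choose δ hδ hgδ using fun i => (h i).1
    exact ⟨δ, fun i _ => hδ i, Finset.sum_congr rfl fun i _ => hgδ i⟩
  · rintro _ ⟨δ, hδ, rfl⟩
    exact Finset.sum_le_sum fun i _ => (h i).2 ⟨δ i, hδ i trivial, rfl⟩

namespace Seminorm

variable {E : Type*} [NormedAddCommGroup E] [NormedSpace ℝ E] [FiniteDimensional ℝ E]
  {p : Seminorm ℝ E}

variable (p) in
theorem continuous_of_finiteDimensional : Continuous p := by
  refine Seminorm.continuous_of_continuousAt_zero ?_
  set b := Module.finBasis ℝ E
  have hbound : ∀ v, p v ≤ ∑ i, |b.coord i v| * p (b i) := fun v => calc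
    p v = p (∑ i, b.coord i v • b i) := by simp [b.sum_repr v]
    _ ≤ ∑ i, p (b.coord i v • b i) :=
      Finset.le_sum_of_subadditive p (map_zero p).le (map_add_le_add p) _ _
    _ = ∑ i, |b.coord i v| * p (b i) := by simp [map_smul_eq_mul]
  have hcont : Continuous fun v => ∑ i, |b.coord i v| * p (b i) := by
    have := fun i => (b.coord i).continuous_of_finiteDimensional
    fun_prop
  rw [ContinuousAt, map_zero]
  refine squeeze_zero (fun v => apply_nonneg p v) hbound ?_
  simpa using hcont.tendsto 0

theorem exists_pos_mul_norm_le (hp : ∀ v, p v = 0 → v = 0) :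
    ∃ c > 0, ∀ v, c * ‖v‖ ≤ p v := by
  rcases subsingleton_or_nontrivial E with hE | hE
  · exact ⟨1, one_pos, fun v => by simp [Subsingleton.elim v 0]⟩
  obtain ⟨u, hu, hmin⟩ := (isCompact_sphere (0 : E) 1).exists_isMinOn
    (NormedSpace.sphere_nonempty.2 zero_le_one) p.continuous_of_finiteDimensional.continuousOn
  have hu0 : u ≠ 0 := ne_zero_of_mem_unit_sphere ⟨u, hu⟩
  refine ⟨p u, (apply_nonneg p u).lt_of_ne fun h => hu0 (hp u h.symm), fun v => ?_⟩
  rcases eq_or_ne v 0 with rfl | hv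
  · simp
  have hnv : 0 < ‖v‖ := norm_pos_iff.2 hv
  have hmem : ‖v‖⁻¹ • v ∈ Metric.sphere (0 : E) 1 := by
    simp [norm_smul, hnv.ne']
  have hle : p u ≤ ‖v‖⁻¹ * p v := by
    simpa [map_smul_eq_mul, abs_of_pos hnv] using hmin hmem
  rwa [le_inv_mul_iff₀ hnv, mul_comm] at hle

theorem isCompact_closedBall_zero (hp : ∀ v, p v = 0 → v = 0) (r : ℝ) :
    IsCompact (p.closedBall 0 r) := by
  obtain ⟨c, hc, hcp⟩ := exists_pos_mul_norm_le hp
  rw [closedBall_zero_eq]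
  refine Metric.isCompact_of_isClosed_isBounded
    (isClosed_le p.continuous_of_finiteDimensional continuous_const) ?_
  refine (Metric.isBounded_iff_subset_closedBall 0).2 ⟨r / c, fun v hv => ?_⟩
  rw [mem_closedBall_zero_iff, le_div_iff₀ hc, mul_comm]
  exact (hcp v).trans hv

variable (p) in
noncomputable def dualNorm (f : E → ℝ) : ℝ := sSup {t | ∃ δ, p δ ≤ 1 ∧ t = f δ}

theorem isGreatest_dualNorm (hp : ∀ v, p v = 0 → v = 0) (f : E →ₗ[ℝ] ℝ) :
    IsGreatest {t | ∃ δ, p δ ≤ 1 ∧ t = f δ} (p.dualNorm f) := by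
  have himage : {t | ∃ δ, p δ ≤ 1 ∧ t = f δ} = f '' p.closedBall 0 1 := by
    ext t
    simp [eq_comm]
  rw [dualNorm, himage]
  exact ((isCompact_closedBall_zero hp 1).image f.continuous_of_finiteDimensional).isGreatest_sSup
    ⟨0, 0, by simp⟩

theorem abs_apply_le_dualNorm_mul (hp : ∀ v, p v = 0 → v = 0) (f : E →ₗ[ℝ] ℝ) (δ : E) :
    |f δ| ≤ p.dualNorm f * p δ := by
  have hle : ∀ v, f v ≤ p.dualNorm f * p v := by
    intro v
    rcases eq_or_ne v 0 with rfl | hv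
    · simp
    have hpv : 0 < p v := (apply_nonneg p v).lt_of_ne fun h => hv (hp v h.symm)
    have hunit : p ((p v)⁻¹ • v) ≤ 1 := by
      rw [map_smul_eq_mul, Real.norm_eq_abs, abs_inv, abs_of_pos hpv, inv_mul_cancel₀ hpv.ne']
    have := (isGreatest_dualNorm hp f).2 ⟨_, hunit, rfl⟩
    rwa [map_smul, smul_eq_mul, inv_mul_le_iff₀ hpv, mul_comm] at this
  have hneg := hle (-δ)
  rw [map_neg, map_neg_eq_map] at hneg
  exact abs_le.2 ⟨by linarith, hle δ⟩

theorem isGreatest_image_sq_add_apply (hp : ∀ v, p v = 0 → v = 0) (f : E →ₗ[ℝ] ℝ) (a : ℝ)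
    {ε : ℝ} (hε : 0 ≤ ε) :
    IsGreatest ((fun δ => (a + f δ) ^ 2) '' {δ | p δ ≤ ε}) ((|a| + ε * p.dualNorm f) ^ 2) := by
  obtain ⟨⟨δ₀, hδ₀, hfδ₀⟩, hdual⟩ := isGreatest_dualNorm hp f
  have hs : 0 ≤ p.dualNorm f := hdual ⟨0, by simp, by simp⟩
  have hεδ₀ : p (ε • δ₀) ≤ ε := by
    rw [map_smul_eq_mul, Real.norm_eq_abs, abs_of_nonneg hε]
    exact mul_le_of_le_one_right hε hδ₀
  rw [show (fun δ => (a + f δ) ^ 2) = (fun t => (a + t) ^ 2) ∘ f from rfl, image_comp]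
  refine isGreatest_image_sq_add _ _ ?_ ⟨ε • δ₀, hεδ₀, ?_⟩
    ⟨-(ε • δ₀), (map_neg_eq_map p _).trans_le hεδ₀, ?_⟩
  · rintro _ ⟨δ, hδ, rfl⟩
    calc |f δ| ≤ p.dualNorm f * p δ := abs_apply_le_dualNorm_mul hp f δ
      _ ≤ ε * p.dualNorm f := by rw [mul_comm]; exact mul_le_mul_of_nonneg_right hδ hs
  · rw [map_smul, ← hfδ₀, smul_eq_mul]
  · rw [map_neg, map_smul, ← hfδ₀, smul_eq_mul]

end Seminorm

/-- The worst-case adversarial least-squares loss, where each row xᵢ of X is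
independently perturbed within a ball of radius ε in a norm p with dual norm
‖·‖*, equals (1/2)‖Xw−y‖₂² + ε‖w‖*‖Xw−y‖₁ + (ε²n/2)‖w‖*². -/
theorem stmt_15 (n d : ℕ) (p : Seminorm ℝ (Fin d → ℝ))
    (hp : ∀ v : Fin d → ℝ, p v = 0 → v = 0)
    (X : Matrix (Fin n) (Fin d) ℝ) (y : Fin n → ℝ) (w : Fin d → ℝ)
    (ε : ℝ) (hε : 0 < ε) :
    IsGreatest
      {r : ℝ | ∃ δ : Fin n → Fin d → ℝ, (∀ i, p (δ i) ≤ ε) ∧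
        r = (1 / 2) * ∑ i, ((∑ j, (X i j + δ i j) * w j) - y i) ^ 2}
      ((1 / 2) * ∑ i, (X.mulVec w i - y i) ^ 2 +
        ε * sSup {t : ℝ | ∃ δ : Fin d → ℝ, p δ ≤ 1 ∧ t = ∑ j, δ j * w j} *
          ∑ i, |X.mulVec w i - y i| +
        ε ^ 2 * n / 2 *
          sSup {t : ℝ | ∃ δ : Fin d → ℝ, p δ ≤ 1 ∧ t = ∑ j, δ j * w j} ^ 2) := by
  set f : (Fin d → ℝ) →ₗ[ℝ] ℝ := (dotProductBilin ℝ ℝ).flip w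
  set s := p.dualNorm f
  set a : Fin n → ℝ := fun i => X.mulVec w i - y i
  have hsample : ∀ i, IsGreatest
      ((fun δ : Fin d → ℝ => ((∑ j, (X i j + δ j) * w j) - y i) ^ 2) '' {δ | p δ ≤ ε})
      ((|a i| + ε * s) ^ 2) := by
    intro i
    convert p.isGreatest_image_sq_add_apply hp f (a i) hε.le using 3 with δ
    simp [a, f, Matrix.mulVec, dotProduct, add_mul, Finset.sum_add_distrib]
    ring
  -- the ascription puts `ℝ`'s own `LE` instance in place of `Preorder.toLE`, as `convert` needs
  have hhalf : IsGreatest (α := ℝ) _ _ :=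
    (monotone_mul_left_of_nonneg (by norm_num : (0 : ℝ) ≤ 1 / 2)).map_isGreatest
      (isGreatest_sum_pi hsample)
  change IsGreatest _ ((1 / 2) * ∑ i, a i ^ 2 + ε * s * ∑ i, |a i| + ε ^ 2 * n / 2 * s ^ 2)
  convert hhalf using 1
  · ext r
    simp [eq_comm]
  · simp only [add_sq, sq_abs, Finset.sum_add_distrib, ← Finset.mul_sum, ← Finset.sum_mul,
      Finset.sum_const, Finset.card_univ, Fintype.card_fin, nsmul_eq_mul]
    ring
end

section
/- Let L₂(w) = (1/2)‖Xw − y‖₂² + ε‖w‖₂‖Xw − y‖₁ + (ε²n/2)‖w‖₂² for ε > 0. Then L₂ is a convex function on ℝᵈ. -/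
open Finset

/-! Completing the square, `L₂(w) = ½ ∑ᵢ (|(Xw − y)ᵢ| + ε‖w‖)²`. Each base `|(Xw − y)ᵢ| + ε‖w‖` is
convex (an absolute value of an affine function plus a nonnegative multiple of a norm) and
nonnegative, so its square is convex, and so is the sum. -/

/-- The L₂-adversarial training objective for least-squares linear regression. -/
noncomputable def advLoss {n d : ℕ} (X : Matrix (Fin n) (Fin d) ℝ)
    (y : Fin n → ℝ) (ε : ℝ) (w : EuclideanSpace ℝ (Fin d)) : ℝ :=
  (1 / 2) * ∑ i, (X.mulVec w i - y i) ^ 2 +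
    ε * ‖w‖ * ∑ i, |X.mulVec w i - y i| +
    ε ^ 2 * n / 2 * ‖w‖ ^ 2

theorem ConvexOn.sum {𝕜 E β ι : Type*} [Semiring 𝕜] [PartialOrder 𝕜] [AddCommMonoid E]
    [AddCommMonoid β] [PartialOrder β] [IsOrderedAddMonoid β] [SMul 𝕜 E] [Module 𝕜 β]
    {s : Set E} (hs : Convex 𝕜 s) (t : Finset ι) {f : ι → E → β}
    (hf : ∀ i ∈ t, ConvexOn 𝕜 s (f i)) : ConvexOn 𝕜 s (∑ i ∈ t, f i) :=
  Finset.sum_induction f (ConvexOn 𝕜 s) (fun _ _ => ConvexOn.add) (convexOn_const 0 hs) hf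

theorem convexOn_abs_sub_linearMap {E : Type*} [AddCommGroup E] [Module ℝ E]
    (ℓ : E →ₗ[ℝ] ℝ) (c : ℝ) : ConvexOn ℝ Set.univ fun x => |ℓ x - c| :=
  convexOn_univ_norm.comp_affineMap (ℓ.toAffineMap - AffineMap.const ℝ E c)

theorem advLoss_eq_sum_sq {n d : ℕ} (X : Matrix (Fin n) (Fin d) ℝ) (y : Fin n → ℝ)
    (ε : ℝ) (w : EuclideanSpace ℝ (Fin d)) :
    advLoss X y ε w = ∑ i, 1 / 2 * (|X.mulVec w i - y i| + ε * ‖w‖) ^ 2 := by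
  have expand (r : ℝ) : 1 / 2 * (|r| + ε * ‖w‖) ^ 2 =
      1 / 2 * r ^ 2 + ε * ‖w‖ * |r| + ε ^ 2 / 2 * ‖w‖ ^ 2 := by
    rw [add_sq, sq_abs]; ring
  simp only [advLoss, expand, sum_add_distrib, ← mul_sum, sum_const, card_univ,
    Fintype.card_fin, nsmul_eq_mul]
  ring

/-- L₂ is a convex function on ℝᵈ. -/
theorem stmt_17 {n d : ℕ} (X : Matrix (Fin n) (Fin d) ℝ) (y : Fin n → ℝ)
    (ε : ℝ) (hε : 0 < ε) :
    ConvexOn ℝ Set.univ (advLoss X y ε) := by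
  have hterm (i : Fin n) : ConvexOn ℝ Set.univ fun w : EuclideanSpace ℝ (Fin d) =>
      1 / 2 * (|X.mulVec w i - y i| + ε * ‖w‖) ^ 2 := by
    let ℓ : EuclideanSpace ℝ (Fin d) →ₗ[ℝ] ℝ :=
      LinearMap.proj i ∘ₗ X.mulVecLin ∘ₗ (WithLp.linearEquiv 2 ℝ (Fin d → ℝ)).toLinearMap
    have hbase := (convexOn_abs_sub_linearMap ℓ (y i)).add (convexOn_univ_norm.smul hε.le)
    have hbase_nonneg (w : EuclideanSpace ℝ (Fin d)) (_ : w ∈ Set.univ) :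
        0 ≤ |ℓ w - y i| + ε * ‖w‖ :=
      add_nonneg (abs_nonneg _) (mul_nonneg hε.le (norm_nonneg w))
    exact (hbase.pow hbase_nonneg 2).smul (by norm_num : (0 : ℝ) ≤ 1 / 2)
  have hsum : advLoss X y ε = ∑ i, fun w : EuclideanSpace ℝ (Fin d) =>
      1 / 2 * (|X.mulVec w i - y i| + ε * ‖w‖) ^ 2 := by
    funext w
    rw [advLoss_eq_sum_sq, Finset.sum_apply]
  rw [hsum]
  exact ConvexOn.sum convex_univ univ fun i _ => hterm i
end

section
/- Let g ∈ ℝᵈ with ‖g‖₂ ≤ 1. Then −Xᵀy + ε‖y‖₁·g is a subgradient of L₂(w) = (1/2)‖Xw − y‖₂² + ε‖w‖₂‖Xw − y‖₁ + (ε²n/2)‖w‖₂² at w = 0; i.e. for all w' ∈ ℝᵈ, ⟨−Xᵀy + ε‖y‖₁ g, w'⟩ ≤ L₂(w') − L₂(0). -/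
open Finset

/-!
Expanding the square, `L₂(w) - L₂(0) = ½‖Xw‖² - ⟨y, Xw⟩ + ε‖w‖‖Xw - y‖₁ + (ε²n/2)‖w‖²`,
while by Cauchy–Schwarz the pairing with the candidate is at most `-⟨y, Xw⟩ + ε‖w‖‖y‖₁`.
It remains to bound `a|yᵢ|` with `a = ε‖w‖` coordinatewise: by the triangle inequality
`a|yᵢ| ≤ a|vᵢ - yᵢ| + a|vᵢ|` with `v = Xw`, and `a|vᵢ| ≤ ½vᵢ² + ½a²` by AM-GM.
-/

lemma mul_abs_le_half_sq_add_mul_abs_sub {a : ℝ} (ha : 0 ≤ a) (u v : ℝ) :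
    a * |u| ≤ 1 / 2 * v ^ 2 + a * |v - u| + a ^ 2 / 2 := by
  have htri : |u| ≤ |v - u| + |v| := by
    linarith [abs_sub_abs_le_abs_sub u v, abs_sub_comm u v]
  have hamgm : a * |v| ≤ 1 / 2 * v ^ 2 + a ^ 2 / 2 := by
    nlinarith [sq_nonneg (|v| - a), sq_abs v]
  nlinarith [mul_le_mul_of_nonneg_left htri ha]

lemma mul_sum_abs_le_half_sum_sq_add_mul_sum_abs_sub {ι : Type*} [Fintype ι] {a : ℝ}
    (ha : 0 ≤ a) (u v : ι → ℝ) :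
    a * ∑ i, |u i| ≤
      1 / 2 * ∑ i, v i ^ 2 + a * ∑ i, |v i - u i| + Fintype.card ι * a ^ 2 / 2 := by
  calc a * ∑ i, |u i| = ∑ i, a * |u i| := Finset.mul_sum _ _ _
    _ ≤ ∑ i, (1 / 2 * v i ^ 2 + a * |v i - u i| + a ^ 2 / 2) :=
        Finset.sum_le_sum fun i _ => mul_abs_le_half_sq_add_mul_abs_sub ha (u i) (v i)
    _ = 1 / 2 * ∑ i, v i ^ 2 + a * ∑ i, |v i - u i| + Fintype.card ι * a ^ 2 / 2 := by
        simp only [Finset.sum_add_distrib, ← Finset.mul_sum, Finset.sum_const,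
          Finset.card_univ, nsmul_eq_mul]
        ring

lemma sum_mul_le_norm_of_norm_le_one {d : ℕ} {g : EuclideanSpace ℝ (Fin d)} (hg : ‖g‖ ≤ 1)
    (w : EuclideanSpace ℝ (Fin d)) : ∑ j, g j * w j ≤ ‖w‖ := by
  have hinner : inner ℝ g w = ∑ j, g j * w j := by
    simp [PiLp.inner_apply, mul_comm]
  calc ∑ j, g j * w j = inner ℝ g w := hinner.symm
    _ ≤ ‖g‖ * ‖w‖ := real_inner_le_norm g w
    _ ≤ ‖w‖ := mul_le_of_le_one_left (norm_nonneg w) hg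

lemma advLoss_zero {n d : ℕ} (X : Matrix (Fin n) (Fin d) ℝ) (y : Fin n → ℝ) (ε : ℝ) :
    advLoss X y ε 0 = 1 / 2 * ∑ i, y i ^ 2 := by
  simp [advLoss]

lemma advLoss_sub_advLoss_zero {n d : ℕ} (X : Matrix (Fin n) (Fin d) ℝ) (y : Fin n → ℝ)
    (ε : ℝ) (w : EuclideanSpace ℝ (Fin d)) :
    advLoss X y ε w - advLoss X y ε 0 =
      1 / 2 * ∑ i, X.mulVec w i ^ 2 - y ⬝ᵥ X.mulVec w +
        ε * ‖w‖ * ∑ i, |X.mulVec w i - y i| + ε ^ 2 * n / 2 * ‖w‖ ^ 2 := by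
  have hsq : ∑ i, (X.mulVec w i - y i) ^ 2 =
      ∑ i, X.mulVec w i ^ 2 - 2 * (y ⬝ᵥ X.mulVec w) + ∑ i, y i ^ 2 := by
    simp only [sub_sq, Finset.sum_add_distrib, Finset.sum_sub_distrib, dotProduct,
      Finset.mul_sum, mul_comm (y _)]
    ring_nf
  rw [advLoss_zero, advLoss, hsq]
  ring

/-- For any g with ‖g‖₂ ≤ 1, the vector −Xᵀy + ε‖y‖₁·g is a subgradient of L₂
at w = 0. -/
theorem stmt_18 {n d : ℕ} (X : Matrix (Fin n) (Fin d) ℝ) (y : Fin n → ℝ)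
    (ε : ℝ) (hε : 0 < ε) (g : EuclideanSpace ℝ (Fin d)) (hg : ‖g‖ ≤ 1) :
    ∀ w' : EuclideanSpace ℝ (Fin d),
      ∑ j, (-(∑ i, X i j * y i) + ε * (∑ i, |y i|) * g j) * w' j
        ≤ advLoss X y ε w' - advLoss X y ε 0 := by
  intro w'
  have hpairing : ∑ j, (-(∑ i, X i j * y i) + ε * (∑ i, |y i|) * g j) * w' j =
      -(y ⬝ᵥ X.mulVec w') + ε * (∑ i, |y i|) * ∑ j, g j * w' j := by
    rw [Matrix.dotProduct_mulVec]
    simp only [dotProduct, Matrix.vecMul, add_mul, Finset.sum_add_distrib, neg_mul,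
      Finset.sum_neg_distrib, Finset.mul_sum, mul_assoc, mul_comm (y _)]
  have hy : 0 ≤ ε * ∑ i, |y i| := mul_nonneg hε.le (Finset.sum_nonneg fun i _ => abs_nonneg _)
  have hcs := mul_le_mul_of_nonneg_left (sum_mul_le_norm_of_norm_le_one hg w') hy
  have hamgm := mul_sum_abs_le_half_sum_sq_add_mul_sum_abs_sub
    (mul_nonneg hε.le (norm_nonneg w')) y (X.mulVec w')
  rw [hpairing, advLoss_sub_advLoss_zero]
  simp only [Fintype.card_fin] at hamgm
  linarith
end

section
/- For every real c > 0 and all positive integers n₋ with n₊ = c·n₋ an integer, sqrt(64c²n₋⁴ + 160c²n₋³ + 75c²n₋² + 32cn₋³ + 60cn₋² + 70cn₋ + 3n₋² + 5n₋) / max(4n₋² + 4cn₋² + 5cn₋ + 5n₋, 4c²n₋² + 4cn₋² + cn₋ + n₋) ≥ min(2c/(1+c), 2/(1+c)). -/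
set_option maxHeartbeats 1000000 in
/-- The sufficient-condition bound of Theorem 4.3: for class imbalance
n₊ = c·n₋, the right-hand side of the ε-condition is bounded below by
min(2c/(1+c), 2/(1+c)). -/
theorem stmt_19 (c : ℝ) (hc : 0 < c) (nn : ℕ) (hnn : 0 < nn)
    (hint : ∃ m : ℕ, (m : ℝ) = c * nn) :
    Real.sqrt (64 * c ^ 2 * (nn : ℝ) ^ 4 + 160 * c ^ 2 * (nn : ℝ) ^ 3 +
          75 * c ^ 2 * (nn : ℝ) ^ 2 + 32 * c * (nn : ℝ) ^ 3 +
          60 * c * (nn : ℝ) ^ 2 + 70 * c * nn + 3 * (nn : ℝ) ^ 2 + 5 * nn) /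
        max (4 * (nn : ℝ) ^ 2 + 4 * c * (nn : ℝ) ^ 2 + 5 * c * nn + 5 * nn)
          (4 * c ^ 2 * (nn : ℝ) ^ 2 + 4 * c * (nn : ℝ) ^ 2 + c * nn + nn)
      ≥ min (2 * c / (1 + c)) (2 / (1 + c)) := by
  have hn : (1 : ℝ) ≤ (nn : ℝ) := by exact_mod_cast hnn
  set n : ℝ := (nn : ℝ)
  have hn0 : (0 : ℝ) ≤ n := by linarith
  have hc1 : (0 : ℝ) < 1 + c := by linarith
  set S : ℝ := 64 * c ^ 2 * n ^ 4 + 160 * c ^ 2 * n ^ 3 +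
      75 * c ^ 2 * n ^ 2 + 32 * c * n ^ 3 + 60 * c * n ^ 2 + 70 * c * n +
      3 * n ^ 2 + 5 * n with hS
  set A : ℝ := 4 * n ^ 2 + 4 * c * n ^ 2 + 5 * c * n + 5 * n with hA
  set B : ℝ := 4 * c ^ 2 * n ^ 2 + 4 * c * n ^ 2 + c * n + n with hB
  have hcn : 0 ≤ c * n := mul_nonneg hc.le hn0
  have hcn2 : 0 ≤ c * n ^ 2 := mul_nonneg hc.le (sq_nonneg n)
  have hcn3 : 0 ≤ c * n ^ 3 := mul_nonneg hc.le (pow_nonneg hn0 3)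
  have hc2n3 : 0 ≤ c ^ 2 * n ^ 3 := mul_nonneg (sq_nonneg c) (pow_nonneg hn0 3)
  have hApos : 0 < A := by nlinarith
  have hBpos : 0 < B := by nlinarith
  have hSpos : 0 ≤ S := by nlinarith
  rcases le_total c 1 with h | h
  · have hmax : max A B = A := max_eq_left (by
      nlinarith [mul_nonneg (mul_nonneg hc.le (sub_nonneg.2 h)) (sq_nonneg n),
        mul_nonneg (sub_nonneg.2 h) (sq_nonneg n)])
    have hmin : min (2 * c / (1 + c)) (2 / (1 + c)) = 2 * c / (1 + c) :=
      min_eq_left ((div_le_div_iff_of_pos_right hc1).2 (by linarith))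
    rw [hmax, hmin, ge_iff_le, le_div_iff₀ hApos]
    have hkey : 2 * c / (1 + c) * A = 2 * c * (4 * n ^ 2 + 5 * n) := by
      rw [hA]; field_simp; ring
    rw [hkey]
    have hx : 0 ≤ 2 * c * (4 * n ^ 2 + 5 * n) := by nlinarith
    exact (Real.le_sqrt hx hSpos).mpr (by
      nlinarith [mul_nonneg (mul_nonneg hc.le (sub_nonneg.2 h)) (sq_nonneg n)])
  · have hc2 : 1 ≤ c ^ 2 := by nlinarith
    have hmin : min (2 * c / (1 + c)) (2 / (1 + c)) = 2 / (1 + c) :=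
      min_eq_right ((div_le_div_iff_of_pos_right hc1).2 (by linarith))
    rw [hmin]
    rcases le_total A B with hAB | hAB
    · rw [max_eq_right hAB, ge_iff_le, le_div_iff₀ hBpos]
      have hkey : 2 / (1 + c) * B = 2 * (4 * c * n ^ 2 + n) := by
        rw [hB]; field_simp; ring
      rw [hkey]
      have hx : 0 ≤ 2 * (4 * c * n ^ 2 + n) := by nlinarith
      exact (Real.le_sqrt hx hSpos).mpr (by
        nlinarith [mul_nonneg (sub_nonneg.2 h) (sq_nonneg n)])
    · rw [max_eq_left hAB, ge_iff_le, le_div_iff₀ hApos]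
      have hkey : 2 / (1 + c) * A = 2 * (4 * n ^ 2 + 5 * n) := by
        rw [hA]; field_simp; ring
      rw [hkey]
      have hx : 0 ≤ 2 * (4 * n ^ 2 + 5 * n) := by nlinarith
      exact (Real.le_sqrt hx hSpos).mpr (by
        nlinarith [mul_nonneg (sub_nonneg.2 hc2) (pow_nonneg hn0 4),
          mul_nonneg (sub_nonneg.2 hc2) (pow_nonneg hn0 3),
          mul_nonneg (sub_nonneg.2 hc2) (sq_nonneg n),
          mul_nonneg (sub_nonneg.2 h) (sq_nonneg n)])
end
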